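/- arXiv:1810.11894 — 2 statements merged into one kernel-verified Lean document; each statement's English description precedes it below -/
import Mathlib

section
/- Theorem (general method for local quadratic bounds, antisymmetric increments). Suppose Z_{ij} : ℝ → ℝ ((i,j) ∈ V × V) are continuous τ-periodic functions with Z_{ij}(t) = −Z_{ji}(t) for all i,j,t and identically zero when (i,j) ∉ E, and m_i : ℝ → ℝ (i ∈ V) are continuously differentiable τ-periodic functions with Σ_{i∈V} m_i(t) = 0 for all t, satisfying m_i'(t) + Σ_{j∈V} Z_{ij}(t) = 0 for all i and t, together with the normalization (1/τ)∫₀^τ [(1/2)Σ_{(i,j)∈V×V} α_{ij}(t)Z_{ij}(t) + Σ_{i∈V} γ_i(t)m_i(t)] dt = y_{α,γ}. Then limsup_{y→y_{α,γ}, y≠y_{α,γ}} I_{α,γ}(y)/(y − y_{α,γ})² ≤ (1/(4 y_{α,γ}²)) · Σ_{(i,j)∈E} (1/τ)∫₀^τ (Z_{ij}(t) − (m_i(t)w_{ij}(t) − m_j(t)w_{ji}(t)))² / (𝒬_{ij}(t) + 𝒬_{ji}(t)) dt, where the limsup is taken in [0,∞]. -/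
/-!
Perturb the periodic stationary state along the direction `(Z, m)`: take `ρ = π + δ m` and
`Q = 𝒬 + δ q` with `q_ij - q_ji = Z_ij`. The constraints are linear, so `(Q, ρ)` is admissible
at level `y_{α,γ} (1 + δ)`, while `Φ(q, p) ≤ (q - p)² / (2 min(p, q))` bounds its cost by
`(1 + O(δ)) δ² ∑_E (1/τ) ∫ (q_ij - m_i w_ij)² / (2 𝒬_ij)`. For the best choice of `q` this sum
is `(1/4) ∑_E (1/τ) ∫ (Z_ij - (m_i w_ij - m_j w_ji))² / (𝒬_ij + 𝒬_ji)`, and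
`(y - y_{α,γ})² = δ² y_{α,γ}²`.
-/

open MeasureTheory Filter
open scoped Topology ENNReal

/-- The function `Φ(q,p) = q log(q/p) − q + p` on `[0,∞) × [0,∞)` with values in `[0,∞]`,
with the conventions `Φ(0,p) = p` and `Φ(q,0) = ∞` for `q > 0`. -/
noncomputable def Phi (q p : ℝ) : ℝ≥0∞ :=
  if q = 0 then ENNReal.ofReal p
  else if p = 0 then ⊤
  else ENNReal.ofReal (q * Real.log (q / p) - q + p)

open Function Set

theorem le_add_mul_sq_div_two_of_hasDerivAt {f f' : ℝ → ℝ} {a b M : ℝ} (hab : a ≤ b)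
    (hf : ∀ x ∈ Icc a b, HasDerivAt f (f' x) x) (hf' : ∀ x ∈ Ioo a b, f' x ≤ M * (x - a)) :
    f b ≤ f a + M * (b - a) ^ 2 / 2 := by
  have hanti : AntitoneOn (fun x => f x - M * (x - a) ^ 2 / 2) (Icc a b) := by
    refine antitoneOn_of_hasDerivWithinAt_nonpos (f' := fun x => f' x - M * (x - a))
      (convex_Icc a b) ?_ (fun x hx => ?_) (fun x hx => ?_)
    · exact fun x hx => ((hf x hx).continuousAt.sub (by fun_prop)).continuousWithinAt
    · rw [interior_Icc] at hx ⊢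
      refine HasDerivAt.hasDerivWithinAt ?_
      refine ((hf x (Ioo_subset_Icc_self hx)).sub
        ((((hasDerivAt_id' x).sub_const a).pow 2).const_mul M |>.div_const 2)).congr_deriv ?_
      push_cast
      ring
    · rw [interior_Icc] at hx
      linarith [hf' x hx]
  have := hanti (left_mem_Icc.2 hab) (right_mem_Icc.2 hab) hab
  simp only [sub_self] at this
  linarith

theorem Phi_le_sq_div_two_min {q p : ℝ} (hq : 0 < q) (hp : 0 < p) :
    Phi q p ≤ ENNReal.ofReal ((q - p) ^ 2 / (2 * min p q)) := by
  rw [Phi, if_neg hq.ne', if_neg hp.ne']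
  refine ENNReal.ofReal_le_ofReal ?_
  rcases le_total p q with hpq | hqp
  · have key := le_add_mul_sq_div_two_of_hasDerivAt (f := fun s => s * Real.log (s / p) - s + p)
      (f' := fun s => Real.log (s / p)) (M := 1 / p) hpq (fun s hs => ?_) (fun s hs => ?_)
    · refine key.trans_eq ?_
      rw [min_eq_left hpq, div_self hp.ne', Real.log_one]
      ring
    · have hs : s ≠ 0 := (hp.trans_le hs.1).ne'
      refine ((((hasDerivAt_id' s).mul (((hasDerivAt_id' s).div_const p).log
        (div_ne_zero hs hp.ne'))).sub (hasDerivAt_id' s)).add_const p).congr_deriv ?_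
      field_simp
      ring
    · rw [one_div_mul_eq_div, sub_div, div_self hp.ne']
      exact Real.log_le_sub_one_of_pos (div_pos (hp.trans hs.1) hp)
  · have key := le_add_mul_sq_div_two_of_hasDerivAt (f := fun s => q * Real.log (q / s) - q + s)
      (f' := fun s => 1 - q / s) (M := 1 / q) hqp (fun s hs => ?_) (fun s hs => ?_)
    · refine key.trans_eq ?_
      rw [min_eq_right hqp, div_self hq.ne', Real.log_one]
      ring
    · have hs : s ≠ 0 := (hq.trans_le hs.1).ne'
      refine (((((hasDerivAt_const s q).div (hasDerivAt_id' s) hs).log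
        (div_ne_zero hq.ne' hs)).const_mul q).sub_const q |>.add (hasDerivAt_id' s)).congr_deriv ?_
      simp only [Pi.div_apply]
      field_simp
      ring
    · calc 1 - q / s = (s - q) / s := by field_simp [(hq.trans hs.1).ne']
        _ ≤ (s - q) / q := div_le_div_of_nonneg_left (by linarith [hs.1]) hq hs.1.le
        _ = 1 / q * (s - q) := by ring

theorem Phi_add_mul_le {a u v δ θ : ℝ} (ha : 0 < a) (hθ : θ < 1) (hu : |δ * u| ≤ θ * a)
    (hv : |δ * v| ≤ θ * a) :
    Phi (a + δ * u) (a + δ * v)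
      ≤ ENNReal.ofReal ((1 - θ)⁻¹ * (δ ^ 2 * ((u - v) ^ 2 / (2 * a)))) := by
  have hlow : ∀ x, |δ * x| ≤ θ * a → (1 - θ) * a ≤ a + δ * x := fun x hx => by
    linarith [neg_abs_le (δ * x)]
  have hpos : 0 < (1 - θ) * a := mul_pos (by linarith) ha
  refine (Phi_le_sq_div_two_min (hpos.trans_le (hlow u hu)) (hpos.trans_le (hlow v hv))).trans
    (ENNReal.ofReal_le_ofReal ?_)
  calc (a + δ * u - (a + δ * v)) ^ 2 / (2 * min (a + δ * v) (a + δ * u))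
      ≤ (a + δ * u - (a + δ * v)) ^ 2 / (2 * ((1 - θ) * a)) := by
        gcongr
        exact le_min (hlow v hv) (hlow u hu)
    _ = (1 - θ)⁻¹ * (δ ^ 2 * ((u - v) ^ 2 / (2 * a))) := by
        field_simp [(by linarith : 1 - θ ≠ 0)]
        ring

theorem Function.Periodic.eventually_abs_mul_le {a u : ℝ → ℝ} {τ θ : ℝ} (ha : Periodic a τ)
    (hu : Periodic u τ) (hτ : τ ≠ 0) (ha_cont : Continuous a) (hu_cont : Continuous u)
    (ha_pos : ∀ t, 0 < a t) (hθ : 0 < θ) : ∀ᶠ δ in 𝓝 (0 : ℝ), ∀ t, |δ * u t| ≤ θ * a t := by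
  obtain ⟨C, hC⟩ := isBounded_iff_forall_norm_le.1
    ((hu.div ha).isBounded_of_continuous hτ (hu_cont.div ha_cont fun t => (ha_pos t).ne'))
  have hlim : Tendsto (fun δ : ℝ => |δ| * C) (𝓝 0) (𝓝 0) := by
    simpa using (continuous_abs.mul continuous_const).tendsto (0 : ℝ) (f := fun δ : ℝ => |δ| * C)
  filter_upwards [hlim.eventually (eventually_le_nhds hθ)] with δ hδ t
  have hut : |u t| = |u t / a t| * a t := by
    rw [abs_div, abs_of_pos (ha_pos t), div_mul_cancel₀ _ (ha_pos t).ne']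
  calc |δ * u t| = |δ| * |u t / a t| * a t := by rw [abs_mul, hut, mul_assoc]
    _ ≤ |δ| * C * a t := by
        gcongr
        · exact (ha_pos t).le
        · exact hC _ ⟨t, rfl⟩
    _ ≤ θ * a t := by gcongr; exact (ha_pos t).le

theorem limsup_div_sq_le_of_eventually_le {I : ℝ → ℝ≥0∞} {y₀ B : ℝ} (hy₀ : y₀ ≠ 0)
    (hI : ∀ θ ∈ Ioo (0 : ℝ) 1,
      ∀ᶠ δ in 𝓝 0, I (y₀ * (1 + δ)) ≤ ENNReal.ofReal ((1 - θ)⁻¹ * (δ ^ 2 * B))) :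
    limsup (fun y => I y / ENNReal.ofReal ((y - y₀) ^ 2)) (𝓝[≠] y₀)
      ≤ ENNReal.ofReal (B / y₀ ^ 2) := by
  have hθ : ∀ θ ∈ Ioo (0 : ℝ) 1, limsup (fun y => I y / ENNReal.ofReal ((y - y₀) ^ 2)) (𝓝[≠] y₀)
      ≤ ENNReal.ofReal ((1 - θ)⁻¹ * B / y₀ ^ 2) := by
    intro θ hθ
    have hδ : Tendsto (fun y => (y - y₀) / y₀) (𝓝[≠] y₀) (𝓝 0) := by
      simpa using ((continuous_sub_right y₀).div_const y₀).tendsto y₀ |>.mono_left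
        nhdsWithin_le_nhds
    refine limsup_le_of_le (by isBoundedDefault) ?_
    filter_upwards [hδ.eventually (hI θ hθ), self_mem_nhdsWithin] with y hy hne
    have hsub : y - y₀ ≠ 0 := sub_ne_zero.2 hne
    rw [show y₀ * (1 + (y - y₀) / y₀) = y by field_simp; ring] at hy
    calc I y / ENNReal.ofReal ((y - y₀) ^ 2)
        ≤ ENNReal.ofReal ((1 - θ)⁻¹ * (((y - y₀) / y₀) ^ 2 * B))
            / ENNReal.ofReal ((y - y₀) ^ 2) := by gcongr
      _ = ENNReal.ofReal ((1 - θ)⁻¹ * B / y₀ ^ 2) := by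
          rw [← ENNReal.ofReal_div_of_pos (by positivity)]
          congr 1
          field_simp
  have hlim : Tendsto (fun θ : ℝ => ENNReal.ofReal ((1 - θ)⁻¹ * B / y₀ ^ 2)) (𝓝[>] 0)
      (𝓝 (ENNReal.ofReal (B / y₀ ^ 2))) := by
    refine ENNReal.tendsto_ofReal ?_
    have : ContinuousAt (fun θ : ℝ => (1 - θ)⁻¹ * B / y₀ ^ 2) 0 :=
      (((continuousAt_const.sub continuousAt_id).inv₀ (by norm_num)).mul
        continuousAt_const).div_const _
    simpa using this.tendsto.mono_left nhdsWithin_le_nhds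
  exact ge_of_tendsto hlim (Filter.mem_of_superset (Ioo_mem_nhdsGT one_pos) hθ)

theorem sum_eq_half_sum_add_swap {V : Type*} (E : Finset (V × V))
    (hE : ∀ i j, (i, j) ∈ E ↔ (j, i) ∈ E) (f : V × V → ℝ) :
    ∑ e ∈ E, f e = (1 / 2) * ∑ e ∈ E, (f e + f e.swap) := by
  have hswap : ∑ e ∈ E, f e.swap = ∑ e ∈ E, f e :=
    Finset.sum_nbij' Prod.swap Prod.swap (fun e he => (hE _ _).1 he) (fun e he => (hE _ _).1 he)
      (fun _ _ => rfl) (fun _ _ => rfl) (fun _ _ => rfl)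
  rw [Finset.sum_add_distrib, hswap]
  ring

theorem sum_sum_mul_eq_half_sum_sum_mul_of_sub_eq {V : Type*} [Fintype V] {a q Z : V → V → ℝ}
    (ha : ∀ i j, a i j = -a j i) (hq : ∀ i j, q i j - q j i = Z i j) :
    ∑ i, ∑ j, a i j * q i j = (1 / 2) * ∑ i, ∑ j, a i j * Z i j := by
  have h : ∑ i, ∑ j, a i j * q j i = -∑ i, ∑ j, a i j * q i j := by
    rw [Finset.sum_comm, ← Finset.sum_neg_distrib]
    refine Finset.sum_congr rfl fun i _ => ?_
    rw [← Finset.sum_neg_distrib]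
    refine Finset.sum_congr rfl fun j _ => ?_
    rw [ha]
    ring
  simp only [← hq, mul_sub, Finset.sum_sub_distrib, h]
  ring

open Classical in
/-- Among the `q` with `q i j - q j i = Z i j`, this minimises `∑ (q i j - v i j)² / (2 F i j)`:
the excess `Z i j - (v i j - v j i)` is shared between the two orientations in proportion to `F`. -/
noncomputable def fluxIncrement {V : Type*} (E : Finset (V × V)) (F v Z : V → V → ℝ → ℝ)
    (i j : V) (t : ℝ) : ℝ :=
  if (i, j) ∈ E then
    v i j t + (Z i j t - (v i j t - v j i t)) * F i j t / (F i j t + F j i t)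
  else 0

section fluxIncrement

variable {V : Type*} {E : Finset (V × V)} {F v Z : V → V → ℝ → ℝ}

theorem fluxIncrement_of_notMem {i j : V} (h : (i, j) ∉ E) (t : ℝ) :
    fluxIncrement E F v Z i j t = 0 := by
  simp [fluxIncrement, h]

theorem fluxIncrement_sub_swap (hE : ∀ i j, (i, j) ∈ E ↔ (j, i) ∈ E)
    (hF : ∀ i j, (i, j) ∈ E → ∀ t, 0 < F i j t) (hZ_anti : ∀ i j t, Z i j t = -Z j i t)
    (hZ_zero : ∀ i j, (i, j) ∉ E → ∀ t, Z i j t = 0) (i j : V) (t : ℝ) :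
    fluxIncrement E F v Z i j t - fluxIncrement E F v Z j i t = Z i j t := by
  by_cases h : (i, j) ∈ E
  · have h' := (hE i j).1 h
    have hS : F i j t + F j i t ≠ 0 := (add_pos (hF i j h t) (hF j i h' t)).ne'
    simp only [fluxIncrement, if_pos h, if_pos h', hZ_anti j i t, add_comm (F j i t)]
    field_simp
    ring
  · rw [fluxIncrement_of_notMem h, fluxIncrement_of_notMem (mt (hE i j).2 h), hZ_zero i j h]
    ring

theorem continuous_fluxIncrement (hE : ∀ i j, (i, j) ∈ E ↔ (j, i) ∈ E)
    (hF : ∀ i j, (i, j) ∈ E → ∀ t, 0 < F i j t) (hF_cont : ∀ i j, Continuous (F i j))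
    (hv_cont : ∀ i j, Continuous (v i j)) (hZ_cont : ∀ i j, Continuous (Z i j)) (i j : V) :
    Continuous (fluxIncrement E F v Z i j) := by
  by_cases h : (i, j) ∈ E
  · unfold fluxIncrement
    simp only [if_pos h]
    exact (hv_cont i j).add ((((hZ_cont i j).sub ((hv_cont i j).sub (hv_cont j i))).mul
      (hF_cont i j)).div ((hF_cont i j).add (hF_cont j i))
      fun t => (add_pos (hF i j h t) (hF j i ((hE i j).1 h) t)).ne')
  · unfold fluxIncrement
    simp only [if_neg h]
    exact continuous_const

theorem periodic_fluxIncrement {τ : ℝ} (hF : ∀ i j, Periodic (F i j) τ)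
    (hv : ∀ i j, Periodic (v i j) τ) (hZ : ∀ i j, Periodic (Z i j) τ) (i j : V) :
    Periodic (fluxIncrement E F v Z i j) τ := fun t => by
  simp only [fluxIncrement, hF _ _ t, hv _ _ t, hZ _ _ t]

theorem fluxIncrement_sub_sq_div_add_swap (hE : ∀ i j, (i, j) ∈ E ↔ (j, i) ∈ E)
    (hF : ∀ i j, (i, j) ∈ E → ∀ t, 0 < F i j t) (hZ_anti : ∀ i j t, Z i j t = -Z j i t)
    {i j : V} (h : (i, j) ∈ E) (t : ℝ) :
    (fluxIncrement E F v Z i j t - v i j t) ^ 2 / (2 * F i j t)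
      + (fluxIncrement E F v Z j i t - v j i t) ^ 2 / (2 * F j i t)
      = (1 / 2) * ((Z i j t - (v i j t - v j i t)) ^ 2 / (F i j t + F j i t)) := by
  have h' := (hE i j).1 h
  have h1 := hF i j h t
  have h2 := hF j i h' t
  simp only [fluxIncrement, if_pos h, if_pos h', hZ_anti j i t, add_comm (F j i t)]
  field_simp
  ring

end fluxIncrement

theorem sum_average_fluxIncrement_sub_sq {V : Type*} {E : Finset (V × V)} {F v Z : V → V → ℝ → ℝ}
    {τ : ℝ} (hE : ∀ i j, (i, j) ∈ E ↔ (j, i) ∈ E) (hF : ∀ i j, (i, j) ∈ E → ∀ t, 0 < F i j t)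
    (hF_cont : ∀ i j, Continuous (F i j)) (hv_cont : ∀ i j, Continuous (v i j))
    (hZ_cont : ∀ i j, Continuous (Z i j)) (hZ_anti : ∀ i j t, Z i j t = -Z j i t) :
    ∑ e ∈ E, (1 / τ) * ∫ t in (0 : ℝ)..τ,
        (fluxIncrement E F v Z e.1 e.2 t - v e.1 e.2 t) ^ 2 / (2 * F e.1 e.2 t)
      = (1 / 4) * ∑ e ∈ E, (1 / τ) * ∫ t in (0 : ℝ)..τ,
        (Z e.1 e.2 t - (v e.1 e.2 t - v e.2 e.1 t)) ^ 2 / (F e.1 e.2 t + F e.2 e.1 t) := by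
  have hint : ∀ i j, (i, j) ∈ E → IntervalIntegrable
      (fun t => (fluxIncrement E F v Z i j t - v i j t) ^ 2 / (2 * F i j t)) volume 0 τ :=
    fun i j h => (Continuous.div
      (((continuous_fluxIncrement hE hF hF_cont hv_cont hZ_cont i j).sub (hv_cont i j)).pow 2)
      (continuous_const.mul (hF_cont i j)) fun t =>
        (mul_pos two_pos (hF i j h t)).ne').intervalIntegrable 0 τ
  rw [sum_eq_half_sum_add_swap E hE, Finset.mul_sum, Finset.mul_sum]
  refine Finset.sum_congr rfl fun e he => ?_
  simp only [Prod.fst_swap, Prod.snd_swap]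
  rw [← mul_add, ← intervalIntegral.integral_add (hint _ _ he) (hint _ _ ((hE _ _).1 he)),
    intervalIntegral.integral_congr fun t _ => fluxIncrement_sub_sq_div_add_swap hE hF hZ_anti he t,
    intervalIntegral.integral_const_mul]
  ring

theorem sum_lintegral_Phi_le {ι : Type*} {E : Finset ι} {F u v : ι → ℝ → ℝ} {τ δ θ : ℝ}
    (hτ : 0 < τ) (hθ : θ < 1) (hF_cont : ∀ e ∈ E, Continuous (F e))
    (hu_cont : ∀ e ∈ E, Continuous (u e)) (hv_cont : ∀ e ∈ E, Continuous (v e))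
    (hF : ∀ e ∈ E, ∀ t, 0 < F e t)
    (hsmall : ∀ e ∈ E, ∀ t, |δ * u e t| ≤ θ * F e t ∧ |δ * v e t| ≤ θ * F e t) :
    ∑ e ∈ E, ENNReal.ofReal (1 / τ) *
        ∫⁻ t in Ioc (0 : ℝ) τ, Phi (F e t + δ * u e t) (F e t + δ * v e t)
      ≤ ENNReal.ofReal ((1 - θ)⁻¹ * (δ ^ 2 * ∑ e ∈ E, (1 / τ) * ∫ t in (0 : ℝ)..τ,
          (u e t - v e t) ^ 2 / (2 * F e t))) := by
  set g : ι → ℝ → ℝ := fun e t => (1 - θ)⁻¹ * (δ ^ 2 * ((u e t - v e t) ^ 2 / (2 * F e t)))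
  have hg_nonneg : ∀ e ∈ E, ∀ t, 0 ≤ g e t := fun e he t => by
    have := hF e he t
    have : 0 < 1 - θ := by linarith
    positivity
  have hg_cont : ∀ e ∈ E, Continuous (g e) := fun e he =>
    continuous_const.mul (continuous_const.mul ((((hu_cont e he).sub (hv_cont e he)).pow 2).div
      (continuous_const.mul (hF_cont e he)) fun t => (mul_pos two_pos (hF e he t)).ne'))
  calc ∑ e ∈ E, ENNReal.ofReal (1 / τ) *
        ∫⁻ t in Ioc (0 : ℝ) τ, Phi (F e t + δ * u e t) (F e t + δ * v e t)
      ≤ ∑ e ∈ E, ENNReal.ofReal (1 / τ) * ∫⁻ t in Ioc (0 : ℝ) τ, ENNReal.ofReal (g e t) := by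
        gcongr with e he t
        exact Phi_add_mul_le (hF e he t) hθ (hsmall e he t).1 (hsmall e he t).2
    _ = ENNReal.ofReal (∑ e ∈ E, (1 / τ) * ∫ t in (0 : ℝ)..τ, g e t) := by
        rw [ENNReal.ofReal_sum_of_nonneg fun e he => mul_nonneg (by positivity)
          (intervalIntegral.integral_nonneg hτ.le fun t _ => hg_nonneg e he t)]
        refine Finset.sum_congr rfl fun e he => ?_
        rw [ENNReal.ofReal_mul (by positivity), intervalIntegral.integral_of_le hτ.le,
          ofReal_integral_eq_lintegral_ofReal (hg_cont e he).integrableOn_Ioc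
            (Eventually.of_forall (hg_nonneg e he))]
    _ = _ := by
        simp only [g, intervalIntegral.integral_const_mul, Finset.mul_sum]
        congr 1
        refine Finset.sum_congr rfl fun e _ => by ring

/-- `(Q, ρ) ∈ F_{α,γ,y}`. -/
structure IsAdmissible {V : Type*} [Fintype V] (E : Finset (V × V)) (τ : ℝ)
    (α : V → V → ℝ → ℝ) (γ : V → ℝ → ℝ) (y : ℝ) (Q : V → V → ℝ → ℝ) (ρ : V → ℝ → ℝ) : Prop where
  flux_continuous : ∀ i j, Continuous (Q i j)
  flux_periodic : ∀ i j, Periodic (Q i j) τ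
  flux_nonneg : ∀ i j t, 0 ≤ Q i j t
  flux_eq_zero : ∀ i j, (i, j) ∉ E → ∀ t, Q i j t = 0
  density_contDiff : ∀ i, ContDiff ℝ 1 (ρ i)
  density_periodic : ∀ i, Periodic (ρ i) τ
  density_nonneg : ∀ i t, 0 ≤ ρ i t
  density_sum : ∀ t, ∑ i, ρ i t = 1
  continuity_eq : ∀ i t, deriv (ρ i) t + (∑ j, Q i j t) - (∑ j, Q j i t) = 0
  average_eq : (1 / τ) * (∫ t in (0 : ℝ)..τ,
    ((∑ i, ∑ j, α i j t * Q i j t) + ∑ i, γ i t * ρ i t)) = y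

noncomputable def pathCost {V : Type*} (E : Finset (V × V)) (τ : ℝ) (w Q : V → V → ℝ → ℝ)
    (ρ : V → ℝ → ℝ) : ℝ≥0∞ :=
  ∑ e ∈ E, ENNReal.ofReal (1 / τ) *
    (∫⁻ t in Set.Ioc (0:ℝ) τ, Phi (Q e.1 e.2 t) (ρ e.1 t * w e.1 e.2 t))

/-- The rate function `I_{α,γ}`. The defining set is spelled out as a conjunction rather than
through `IsAdmissible` so that it is definitionally the set in the hypothesis `hI` of `stmt3`. -/
noncomputable def rateFunction {V : Type*} [Fintype V] (E : Finset (V × V)) (τ : ℝ)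
    (w α : V → V → ℝ → ℝ) (γ : V → ℝ → ℝ) (y : ℝ) : ℝ≥0∞ :=
  sInf { c : ℝ≥0∞ |
    ∃ (Q : V → V → ℝ → ℝ) (ρ : V → ℝ → ℝ),
      (∀ i j, Continuous (Q i j)) ∧
      (∀ i j, Function.Periodic (Q i j) τ) ∧
      (∀ i j t, 0 ≤ Q i j t) ∧
      (∀ i j, (i, j) ∉ E → ∀ t, Q i j t = 0) ∧
      (∀ i, ContDiff ℝ 1 (ρ i)) ∧
      (∀ i, Function.Periodic (ρ i) τ) ∧
      (∀ i t, 0 ≤ ρ i t) ∧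
      (∀ t : ℝ, ∑ i, ρ i t = 1) ∧
      (∀ i t, deriv (ρ i) t + (∑ j, Q i j t) - (∑ j, Q j i t) = 0) ∧
      ((1 / τ) * (∫ t in (0:ℝ)..τ,
        ((∑ i, ∑ j, α i j t * Q i j t) + ∑ i, γ i t * ρ i t)) = y) ∧
      c = pathCost E τ w Q ρ }

theorem rateFunction_le_pathCost {V : Type*} [Fintype V] {E : Finset (V × V)} {τ y : ℝ}
    {w α Q : V → V → ℝ → ℝ} {γ ρ : V → ℝ → ℝ} (h : IsAdmissible E τ α γ y Q ρ) :
    rateFunction E τ w α γ y ≤ pathCost E τ w Q ρ :=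
  sInf_le ⟨Q, ρ, h.flux_continuous, h.flux_periodic, h.flux_nonneg, h.flux_eq_zero,
    h.density_contDiff, h.density_periodic, h.density_nonneg, h.density_sum, h.continuity_eq,
    h.average_eq, rfl⟩

theorem IsAdmissible.add_mul {V : Type*} [Fintype V] {E : Finset (V × V)} {τ : ℝ}
    {α : V → V → ℝ → ℝ} {γ : V → ℝ → ℝ} {y₀ y₁ δ : ℝ} {Q₀ q : V → V → ℝ → ℝ} {ρ₀ m : V → ℝ → ℝ}
    (h₀ : IsAdmissible E τ α γ y₀ Q₀ ρ₀) (hα : ∀ i j, Continuous (α i j))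
    (hγ : ∀ i, Continuous (γ i)) (hq_cont : ∀ i j, Continuous (q i j))
    (hq_per : ∀ i j, Periodic (q i j) τ) (hq_zero : ∀ i j, (i, j) ∉ E → ∀ t, q i j t = 0)
    (hm_diff : ∀ i, ContDiff ℝ 1 (m i)) (hm_per : ∀ i, Periodic (m i) τ)
    (hm_sum : ∀ t, ∑ i, m i t = 0)
    (hqm : ∀ i t, deriv (m i) t + (∑ j, q i j t) - (∑ j, q j i t) = 0)
    (hy₁ : (1 / τ) * (∫ t in (0 : ℝ)..τ,
      ((∑ i, ∑ j, α i j t * q i j t) + ∑ i, γ i t * m i t)) = y₁)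
    (hQ : ∀ i j t, 0 ≤ Q₀ i j t + δ * q i j t) (hρ : ∀ i t, 0 ≤ ρ₀ i t + δ * m i t) :
    IsAdmissible E τ α γ (y₀ + δ * y₁) (fun i j t => Q₀ i j t + δ * q i j t)
      (fun i t => ρ₀ i t + δ * m i t) where
  flux_continuous i j := (h₀.flux_continuous i j).add (continuous_const.mul (hq_cont i j))
  flux_periodic i j t := by simp only [h₀.flux_periodic i j t, hq_per i j t]
  flux_nonneg := hQ
  flux_eq_zero i j h t := by simp [h₀.flux_eq_zero i j h t, hq_zero i j h t]
  density_contDiff i := (h₀.density_contDiff i).add (contDiff_const.mul (hm_diff i))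
  density_periodic i t := by simp only [h₀.density_periodic i t, hm_per i t]
  density_nonneg := hρ
  density_sum t := by
    rw [Finset.sum_add_distrib, ← Finset.mul_sum, h₀.density_sum, hm_sum, mul_zero, add_zero]
  continuity_eq i t := by
    have hρ₀ := ((h₀.density_contDiff i).differentiable one_ne_zero).differentiableAt (x := t)
    have hm := ((hm_diff i).differentiable one_ne_zero).differentiableAt (x := t)
    rw [deriv_fun_add hρ₀ (hm.const_mul δ), deriv_const_mul δ hm]
    simp only [Finset.sum_add_distrib, ← Finset.mul_sum]
    linear_combination h₀.continuity_eq i t + δ * hqm i t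
  average_eq := by
    have hQ₀ := h₀.flux_continuous
    have hρ₀ := fun i => (h₀.density_contDiff i).continuous
    have hm := fun i => (hm_diff i).continuous
    have hf : Continuous fun t => (∑ i, ∑ j, α i j t * Q₀ i j t) + ∑ i, γ i t * ρ₀ i t := by
      fun_prop
    have hg : Continuous fun t => (∑ i, ∑ j, α i j t * q i j t) + ∑ i, γ i t * m i t := by
      fun_prop
    rw [intervalIntegral.integral_congr (g := fun t => ((∑ i, ∑ j, α i j t * Q₀ i j t)
        + ∑ i, γ i t * ρ₀ i t) + δ * ((∑ i, ∑ j, α i j t * q i j t) + ∑ i, γ i t * m i t))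
        fun t _ => by
          simp only [mul_add, Finset.sum_add_distrib, Finset.mul_sum, mul_left_comm δ]; ring,
      intervalIntegral.integral_add (hf.intervalIntegrable _ _)
        ((hg.intervalIntegrable _ _).const_mul δ), intervalIntegral.integral_const_mul,
      ← h₀.average_eq, ← hy₁]
    ring

theorem isAdmissible_stationary {V : Type*} [Fintype V] {E : Finset (V × V)} {τ y₀ : ℝ}
    {w α : V → V → ℝ → ℝ} {γ ρ : V → ℝ → ℝ} (hw_cont : ∀ i j, Continuous (w i j))
    (hw_per : ∀ i j, Periodic (w i j) τ) (hw_pos : ∀ i j, (i, j) ∈ E → ∀ t, 0 < w i j t)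
    (hw_zero : ∀ i j, (i, j) ∉ E → ∀ t, w i j t = 0) (hρ_diff : ∀ i, ContDiff ℝ 1 (ρ i))
    (hρ_per : ∀ i, Periodic (ρ i) τ) (hρ_pos : ∀ i t, 0 < ρ i t) (hρ_sum : ∀ t, ∑ i, ρ i t = 1)
    (hρ_eq : ∀ i t, deriv (ρ i) t + (∑ j, ρ i t * w i j t) - (∑ j, ρ j t * w j i t) = 0)
    (hy₀ : y₀ = (1 / τ) * (∫ t in (0 : ℝ)..τ,
      ((∑ i, ∑ j, α i j t * (ρ i t * w i j t)) + ∑ i, γ i t * ρ i t))) :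
    IsAdmissible E τ α γ y₀ (fun i j t => ρ i t * w i j t) ρ where
  flux_continuous i j := (hρ_diff i).continuous.mul (hw_cont i j)
  flux_periodic i j := (hρ_per i).mul (hw_per i j)
  flux_nonneg i j t := by
    by_cases h : (i, j) ∈ E
    exacts [(mul_pos (hρ_pos i t) (hw_pos i j h t)).le, by simp [hw_zero i j h t]]
  flux_eq_zero i j h t := by simp [hw_zero i j h t]
  density_contDiff := hρ_diff
  density_periodic := hρ_per
  density_nonneg i t := (hρ_pos i t).le
  density_sum := hρ_sum
  continuity_eq := hρ_eq
  average_eq := hy₀.symm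

theorem eventually_rateFunction_add_mul_le {V : Type*} [Fintype V] {E : Finset (V × V)}
    {τ θ y₀ y₁ : ℝ}
    {w α : V → V → ℝ → ℝ} {γ : V → ℝ → ℝ} {q : V → V → ℝ → ℝ} {ρ₀ m : V → ℝ → ℝ}
    (h₀ : IsAdmissible E τ α γ y₀ (fun i j t => ρ₀ i t * w i j t) ρ₀) (hτ : 0 < τ)
    (hθ : θ ∈ Ioo (0 : ℝ) 1) (hρ₀ : ∀ i t, 0 < ρ₀ i t)
    (hw_pos : ∀ i j, (i, j) ∈ E → ∀ t, 0 < w i j t) (hw_cont : ∀ i j, Continuous (w i j))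
    (hw_per : ∀ i j, Periodic (w i j) τ) (hα : ∀ i j, Continuous (α i j))
    (hγ : ∀ i, Continuous (γ i)) (hq_cont : ∀ i j, Continuous (q i j))
    (hq_per : ∀ i j, Periodic (q i j) τ) (hq_zero : ∀ i j, (i, j) ∉ E → ∀ t, q i j t = 0)
    (hm_diff : ∀ i, ContDiff ℝ 1 (m i)) (hm_per : ∀ i, Periodic (m i) τ)
    (hm_sum : ∀ t, ∑ i, m i t = 0)
    (hqm : ∀ i t, deriv (m i) t + (∑ j, q i j t) - (∑ j, q j i t) = 0)
    (hy₁ : (1 / τ) * (∫ t in (0 : ℝ)..τ,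
      ((∑ i, ∑ j, α i j t * q i j t) + ∑ i, γ i t * m i t)) = y₁) :
    ∀ᶠ δ in 𝓝 0, rateFunction E τ w α γ (y₀ + δ * y₁) ≤ ENNReal.ofReal ((1 - θ)⁻¹ * (δ ^ 2 *
      ∑ e ∈ E, (1 / τ) * ∫ t in (0 : ℝ)..τ,
        (q e.1 e.2 t - m e.1 t * w e.1 e.2 t) ^ 2 / (2 * (ρ₀ e.1 t * w e.1 e.2 t)))) := by
  have hQ₀ : ∀ e ∈ E, ∀ t, 0 < ρ₀ e.1 t * w e.1 e.2 t := fun e he t =>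
    mul_pos (hρ₀ e.1 t) (hw_pos e.1 e.2 he t)
  have hm_cont := fun i => (hm_diff i).continuous
  have hsmallE : ∀ᶠ δ in 𝓝 (0 : ℝ), ∀ e ∈ E, ∀ t, |δ * q e.1 e.2 t| ≤ θ * (ρ₀ e.1 t * w e.1 e.2 t)
      ∧ |δ * (m e.1 t * w e.1 e.2 t)| ≤ θ * (ρ₀ e.1 t * w e.1 e.2 t) :=
    (eventually_all_finset E).2 fun e he =>
      (((h₀.flux_periodic _ _).eventually_abs_mul_le (hq_per _ _) hτ.ne' (h₀.flux_continuous _ _)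
        (hq_cont _ _) (hQ₀ e he) hθ.1).and ((h₀.flux_periodic _ _).eventually_abs_mul_le
        ((hm_per e.1).mul (hw_per e.1 e.2)) hτ.ne' (h₀.flux_continuous _ _)
        ((hm_cont e.1).mul (hw_cont e.1 e.2)) (hQ₀ e he) hθ.1)).mono fun _ h t => ⟨h.1 t, h.2 t⟩
  have hsmallV : ∀ᶠ δ in 𝓝 (0 : ℝ), ∀ i t, |δ * m i t| ≤ 1 * ρ₀ i t :=
    eventually_all.2 fun i => (h₀.density_periodic i).eventually_abs_mul_le (hm_per i) hτ.ne'
      (h₀.density_contDiff i).continuous (hm_cont i) (hρ₀ i) one_pos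
  filter_upwards [hsmallE, hsmallV] with δ hδE hδV
  have hQ : ∀ i j t, 0 ≤ ρ₀ i t * w i j t + δ * q i j t := fun i j t => by
    by_cases h : (i, j) ∈ E
    · have := (hδE (i, j) h t).1
      have := hQ₀ (i, j) h t
      nlinarith [neg_abs_le (δ * q i j t), hθ.2]
    · simp [h₀.flux_eq_zero i j h t, hq_zero i j h t]
  have hρ : ∀ i t, 0 ≤ ρ₀ i t + δ * m i t := fun i t => by
    linarith [neg_abs_le (δ * m i t), hδV i t]
  refine (rateFunction_le_pathCost (h₀.add_mul hα hγ hq_cont hq_per hq_zero hm_diff hm_per hm_sum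
    hqm hy₁ hQ hρ)).trans ?_
  refine (le_of_eq ?_).trans (sum_lintegral_Phi_le (E := E) (F := fun e t => ρ₀ e.1 t * w e.1 e.2 t)
    (u := fun e => q e.1 e.2) (v := fun e t => m e.1 t * w e.1 e.2 t) hτ hθ.2
    (fun _ _ => h₀.flux_continuous _ _) (fun _ _ => hq_cont _ _)
    (fun e _ => (hm_cont e.1).mul (hw_cont e.1 e.2)) hQ₀ hδE)
  simp only [pathCost, add_mul, mul_assoc]

theorem stmt3_general
    {V : Type} [Fintype V]
    (E : Finset (V × V))
    (hE_symm : ∀ i j : V, (i, j) ∈ E ↔ (j, i) ∈ E)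
    (τ : ℝ) (hτ : 0 < τ)
    (w : V → V → ℝ → ℝ)
    (hw_cont : ∀ i j, Continuous (w i j))
    (hw_per : ∀ i j, Function.Periodic (w i j) τ)
    (hw_pos : ∀ i j, (i, j) ∈ E → ∀ t, 0 < w i j t)
    (hw_zero : ∀ i j, (i, j) ∉ E → ∀ t, w i j t = 0)
    (pi : V → ℝ → ℝ)
    (hpi_diff : ∀ i, ContDiff ℝ 1 (pi i))
    (hpi_per : ∀ i, Function.Periodic (pi i) τ)
    (hpi_pos : ∀ i t, 0 < pi i t)
    (hpi_sum : ∀ t : ℝ, ∑ i, pi i t = 1)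
    (hpi_cont_eq : ∀ i t, deriv (pi i) t
      + (∑ j, pi i t * w i j t) - (∑ j, pi j t * w j i t) = 0)
    (α : V → V → ℝ → ℝ)
    (hα_cont : ∀ i j, Continuous (α i j))
    (hα_anti : ∀ i j (t : ℝ), α i j t = - α j i t)
    (γ : V → ℝ → ℝ)
    (hγ_cont : ∀ i, Continuous (γ i))
    (y0 : ℝ)
    (hy0 : y0 = (1 / τ) * (∫ t in (0:ℝ)..τ,
      ((∑ i, ∑ j, α i j t * (pi i t * w i j t)) + ∑ i, γ i t * pi i t)))
    (hy0_ne : y0 ≠ 0)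
    (Iag : ℝ → ℝ≥0∞)
    (hI : ∀ y : ℝ, Iag y = sInf { c : ℝ≥0∞ |
      ∃ (Q : V → V → ℝ → ℝ) (ρ : V → ℝ → ℝ),
        (∀ i j, Continuous (Q i j)) ∧
        (∀ i j, Function.Periodic (Q i j) τ) ∧
        (∀ i j t, 0 ≤ Q i j t) ∧
        (∀ i j, (i, j) ∉ E → ∀ t, Q i j t = 0) ∧
        (∀ i, ContDiff ℝ 1 (ρ i)) ∧
        (∀ i, Function.Periodic (ρ i) τ) ∧
        (∀ i t, 0 ≤ ρ i t) ∧
        (∀ t : ℝ, ∑ i, ρ i t = 1) ∧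
        (∀ i t, deriv (ρ i) t + (∑ j, Q i j t) - (∑ j, Q j i t) = 0) ∧
        ((1 / τ) * (∫ t in (0:ℝ)..τ,
          ((∑ i, ∑ j, α i j t * Q i j t) + ∑ i, γ i t * ρ i t)) = y) ∧
        c = ∑ e ∈ E, ENNReal.ofReal (1 / τ) *
          (∫⁻ t in Set.Ioc (0:ℝ) τ, Phi (Q e.1 e.2 t) (ρ e.1 t * w e.1 e.2 t)) })
    -- the legal input (Z, m)
    (Z : V → V → ℝ → ℝ)
    (hZ_cont : ∀ i j, Continuous (Z i j))
    (hZ_per : ∀ i j, Function.Periodic (Z i j) τ)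
    (hZ_anti : ∀ i j (t : ℝ), Z i j t = - Z j i t)
    (hZ_zero : ∀ i j, (i, j) ∉ E → ∀ t, Z i j t = 0)
    (m : V → ℝ → ℝ)
    (hm_diff : ∀ i, ContDiff ℝ 1 (m i))
    (hm_per : ∀ i, Function.Periodic (m i) τ)
    (hm_sum : ∀ t : ℝ, ∑ i, m i t = 0)
    (hm_cont_eq : ∀ i (t : ℝ), deriv (m i) t + (∑ j, Z i j t) = 0)
    (h_norm : (1 / τ) * (∫ t in (0:ℝ)..τ,
      ((1 / 2) * (∑ i, ∑ j, α i j t * Z i j t) + ∑ i, γ i t * m i t)) = y0) :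
    Filter.limsup (fun y : ℝ => Iag y / ENNReal.ofReal ((y - y0) ^ 2)) (𝓝[≠] y0)
      ≤ ENNReal.ofReal ((1 / (4 * y0 ^ 2)) *
          ∑ e ∈ E, (1 / τ) * (∫ t in (0:ℝ)..τ,
            (Z e.1 e.2 t - (m e.1 t * w e.1 e.2 t - m e.2 t * w e.2 e.1 t)) ^ 2
              / (pi e.1 t * w e.1 e.2 t + pi e.2 t * w e.2 e.1 t))) := by
  set F : V → V → ℝ → ℝ := fun i j t => pi i t * w i j t
  set v : V → V → ℝ → ℝ := fun i j t => m i t * w i j t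
  set q := fluxIncrement E F v Z
  have hF : ∀ i j, (i, j) ∈ E → ∀ t, 0 < F i j t :=
    fun i j h t => mul_pos (hpi_pos i t) (hw_pos i j h t)
  have hF_cont : ∀ i j, Continuous (F i j) := fun i j => (hpi_diff i).continuous.mul (hw_cont i j)
  have hv_cont : ∀ i j, Continuous (v i j) := fun i j => (hm_diff i).continuous.mul (hw_cont i j)
  have hq_sub : ∀ i j t, q i j t - q j i t = Z i j t :=
    fluxIncrement_sub_swap hE_symm hF hZ_anti hZ_zero
  have hqm : ∀ i t, deriv (m i) t + (∑ j, q i j t) - (∑ j, q j i t) = 0 := fun i t => by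
    rw [add_sub_assoc, ← Finset.sum_sub_distrib]
    simpa only [hq_sub] using hm_cont_eq i t
  have hq_avg : (1 / τ) * (∫ t in (0 : ℝ)..τ,
      ((∑ i, ∑ j, α i j t * q i j t) + ∑ i, γ i t * m i t)) = y0 := by
    rw [← h_norm]
    congr 1
    refine intervalIntegral.integral_congr fun t _ => ?_
    rw [sum_sum_mul_eq_half_sum_sum_mul_of_sub_eq (hα_anti · · t) (hq_sub · · t)]
  refine (limsup_div_sq_le_of_eventually_le (B := ∑ e ∈ E, (1 / τ) * ∫ t in (0 : ℝ)..τ,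
    (q e.1 e.2 t - v e.1 e.2 t) ^ 2 / (2 * F e.1 e.2 t)) hy0_ne fun θ hθ => ?_).trans_eq ?_
  · filter_upwards [eventually_rateFunction_add_mul_le
      (isAdmissible_stationary hw_cont hw_per hw_pos hw_zero hpi_diff hpi_per hpi_pos hpi_sum
        hpi_cont_eq hy0) hτ hθ hpi_pos hw_pos hw_cont hw_per hα_cont hγ_cont
      (continuous_fluxIncrement hE_symm hF hF_cont hv_cont hZ_cont)
      (periodic_fluxIncrement (fun i j => (hpi_per i).mul (hw_per i j))
        (fun i j => (hm_per i).mul (hw_per i j)) hZ_per)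
      (fun i j h => fluxIncrement_of_notMem h) hm_diff hm_per hm_sum hqm hq_avg] with δ hδ
    rwa [hI, show y0 * (1 + δ) = y0 + δ * y0 by ring]
  · rw [sum_average_fluxIncrement_sub_sq hE_symm hF hF_cont hv_cont hZ_cont hZ_anti]
    congr 1
    ring

theorem stmt3
    {V : Type} [Fintype V] [Nonempty V]
    (E : Finset (V × V)) (hE : ∀ i : V, (i, i) ∉ E)
    (hE_symm : ∀ i j : V, (i, j) ∈ E ↔ (j, i) ∈ E)
    (τ : ℝ) (hτ : 0 < τ)
    (w : V → V → ℝ → ℝ)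
    (hw_cont : ∀ i j, Continuous (w i j))
    (hw_per : ∀ i j, Function.Periodic (w i j) τ)
    (hw_pos : ∀ i j, (i, j) ∈ E → ∀ t, 0 < w i j t)
    (hw_zero : ∀ i j, (i, j) ∉ E → ∀ t, w i j t = 0)
    (pi : V → ℝ → ℝ)
    (hpi_diff : ∀ i, ContDiff ℝ 1 (pi i))
    (hpi_per : ∀ i, Function.Periodic (pi i) τ)
    (hpi_pos : ∀ i t, 0 < pi i t)
    (hpi_sum : ∀ t : ℝ, ∑ i, pi i t = 1)
    (hpi_cont_eq : ∀ i t, deriv (pi i) t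
      + (∑ j, pi i t * w i j t) - (∑ j, pi j t * w j i t) = 0)
    (α : V → V → ℝ → ℝ)
    (hα_cont : ∀ i j, Continuous (α i j))
    (hα_per : ∀ i j, Function.Periodic (α i j) τ)
    (hα_anti : ∀ i j (t : ℝ), α i j t = - α j i t)
    (γ : V → ℝ → ℝ)
    (hγ_cont : ∀ i, Continuous (γ i))
    (hγ_per : ∀ i, Function.Periodic (γ i) τ)
    (y0 : ℝ)
    (hy0 : y0 = (1 / τ) * (∫ t in (0:ℝ)..τ,
      ((∑ i, ∑ j, α i j t * (pi i t * w i j t)) + ∑ i, γ i t * pi i t)))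
    (hy0_ne : y0 ≠ 0)
    (Iag : ℝ → ℝ≥0∞)
    (hI : ∀ y : ℝ, Iag y = sInf { c : ℝ≥0∞ |
      ∃ (Q : V → V → ℝ → ℝ) (ρ : V → ℝ → ℝ),
        (∀ i j, Continuous (Q i j)) ∧
        (∀ i j, Function.Periodic (Q i j) τ) ∧
        (∀ i j t, 0 ≤ Q i j t) ∧
        (∀ i j, (i, j) ∉ E → ∀ t, Q i j t = 0) ∧
        (∀ i, ContDiff ℝ 1 (ρ i)) ∧
        (∀ i, Function.Periodic (ρ i) τ) ∧
        (∀ i t, 0 ≤ ρ i t) ∧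
        (∀ t : ℝ, ∑ i, ρ i t = 1) ∧
        (∀ i t, deriv (ρ i) t + (∑ j, Q i j t) - (∑ j, Q j i t) = 0) ∧
        ((1 / τ) * (∫ t in (0:ℝ)..τ,
          ((∑ i, ∑ j, α i j t * Q i j t) + ∑ i, γ i t * ρ i t)) = y) ∧
        c = ∑ e ∈ E, ENNReal.ofReal (1 / τ) *
          (∫⁻ t in Set.Ioc (0:ℝ) τ, Phi (Q e.1 e.2 t) (ρ e.1 t * w e.1 e.2 t)) })
    -- the legal input (Z, m)
    (Z : V → V → ℝ → ℝ)
    (hZ_cont : ∀ i j, Continuous (Z i j))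
    (hZ_per : ∀ i j, Function.Periodic (Z i j) τ)
    (hZ_anti : ∀ i j (t : ℝ), Z i j t = - Z j i t)
    (hZ_zero : ∀ i j, (i, j) ∉ E → ∀ t, Z i j t = 0)
    (m : V → ℝ → ℝ)
    (hm_diff : ∀ i, ContDiff ℝ 1 (m i))
    (hm_per : ∀ i, Function.Periodic (m i) τ)
    (hm_sum : ∀ t : ℝ, ∑ i, m i t = 0)
    (hm_cont_eq : ∀ i (t : ℝ), deriv (m i) t + (∑ j, Z i j t) = 0)
    (h_norm : (1 / τ) * (∫ t in (0:ℝ)..τ,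
      ((1 / 2) * (∑ i, ∑ j, α i j t * Z i j t) + ∑ i, γ i t * m i t)) = y0) :
    Filter.limsup (fun y : ℝ => Iag y / ENNReal.ofReal ((y - y0) ^ 2)) (𝓝[≠] y0)
      ≤ ENNReal.ofReal ((1 / (4 * y0 ^ 2)) *
          ∑ e ∈ E, (1 / τ) * (∫ t in (0:ℝ)..τ,
            (Z e.1 e.2 t - (m e.1 t * w e.1 e.2 t - m e.2 t * w e.2 e.1 t)) ^ 2
              / (pi e.1 t * w e.1 e.2 t + pi e.2 t * w e.2 e.1 t))) :=
  stmt3_general E hE_symm τ hτ w hw_cont hw_per hw_pos hw_zero pi hpi_diff hpi_per hpi_pos hpi_sum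
    hpi_cont_eq α hα_cont hα_anti γ hγ_cont y0 hy0 hy0_ne Iag hI Z hZ_cont hZ_per hZ_anti hZ_zero m
    hm_diff hm_per hm_sum hm_cont_eq h_norm
end

section
/- Corollary (quadratic bound via a divergence-free current). Suppose 𝒦_{ij} : ℝ → ℝ ((i,j) ∈ V × V) are continuous τ-periodic functions with 𝒦_{ij}(t) = −𝒦_{ji}(t) for all i,j,t, identically zero when (i,j) ∉ E, satisfying Σ_{j∈V} 𝒦_{ij}(t) = 0 for all i and t, and such that K := (1/τ)∫₀^τ (1/2)Σ_{(i,j)∈V×V} α_{ij}(t)𝒦_{ij}(t) dt ≠ 0. Define σ̃ := Σ_{(i,j)∈E} (1/τ)∫₀^τ 𝒦_{ij}(t)²/(𝒬_{ij}(t) + 𝒬_{ji}(t)) dt. Then limsup_{y→y_{α,γ}, y≠y_{α,γ}} I_{α,γ}(y)/(y − y_{α,γ})² ≤ σ̃/(4 K²), where the limsup is taken in [0,∞]. -/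
open MeasureTheory Filter
open scoped Topology ENNReal

lemma Real.one_add_mul_log_one_add_sub_le {e : ℝ} (he : |e| ≤ 1 / 2) :
    (1 + e) * Real.log (1 + e) - e ≤ e ^ 2 / 2 * (1 + 8 * |e|) := by
  have h := Real.abs_log_sub_add_sum_range_le (x := -e) (by rw [abs_neg]; linarith) 2
  norm_num [Finset.sum_range_succ] at h
  have he3 : |e| ^ 3 = e ^ 2 * |e| := by rw [← sq_abs e]; ring
  have hlog : Real.log (1 + e) ≤ e - e ^ 2 / 2 + 2 * e ^ 2 * |e| := by
    have : |e| ^ 3 / (1 - |e|) ≤ 2 * |e| ^ 3 := by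
      rw [div_le_iff₀ (by linarith)]; nlinarith [pow_nonneg (abs_nonneg e) 3]
    linarith [le_abs_self (-e + e ^ 2 / 2 + Real.log (1 + e))]
  have := mul_le_mul_of_nonneg_left hlog (by linarith [neg_abs_le e] : 0 ≤ 1 + e)
  nlinarith [le_abs_self e, neg_abs_le e, mul_nonneg (sq_nonneg e) (abs_nonneg e)]

lemma Phi_mul_one_add_le {q e : ℝ} (hq : 0 < q) (he : |e| ≤ 1 / 2) :
    Phi (q * (1 + e)) q ≤ ENNReal.ofReal (q * e ^ 2 / 2 * (1 + 8 * |e|)) := by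
  have he1 : 0 < 1 + e := by linarith [neg_abs_le e]
  rw [Phi, if_neg (by positivity), if_neg hq.ne', mul_div_cancel_left₀ _ hq.ne']
  apply ENNReal.ofReal_le_ofReal
  nlinarith [mul_le_mul_of_nonneg_left (Real.one_add_mul_log_one_add_sub_le he) hq.le]

lemma lintegral_Phi_mul_one_add_le {τ : ℝ} (hτ : 0 ≤ τ) {q r : ℝ → ℝ} (hq_cont : Continuous q)
    (hr_cont : Continuous r) (hq : ∀ t, 0 < q t) {M u : ℝ} (hM : 0 ≤ M) (hr : ∀ t, |r t| ≤ M)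
    (hu : |u| * M ≤ 1 / 2) :
    ∫⁻ t in Set.Ioc 0 τ, Phi (q t * (1 + u * r t)) (q t)
      ≤ ENNReal.ofReal ((1 + 8 * (|u| * M)) * u ^ 2 / 2 * ∫ t in 0..τ, q t * r t ^ 2) := by
  set c := (1 + 8 * (|u| * M)) * u ^ 2 / 2
  have hur : ∀ t, |u * r t| ≤ |u| * M := fun t => by
    rw [abs_mul]; exact mul_le_mul_of_nonneg_left (hr t) (abs_nonneg u)
  have hpoint : ∀ t, Phi (q t * (1 + u * r t)) (q t) ≤ ENNReal.ofReal (c * (q t * r t ^ 2)) :=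
    fun t => (Phi_mul_one_add_le (hq t) ((hur t).trans hu)).trans <| ENNReal.ofReal_le_ofReal <| by
      have : 0 ≤ q t * (u * r t) ^ 2 / 2 := by have := hq t; positivity
      calc q t * (u * r t) ^ 2 / 2 * (1 + 8 * |u * r t|)
          ≤ q t * (u * r t) ^ 2 / 2 * (1 + 8 * (|u| * M)) := by gcongr; exact hur t
        _ = c * (q t * r t ^ 2) := by ring
  have hint : IntegrableOn (fun t => c * (q t * r t ^ 2)) (Set.Ioc 0 τ) :=
    (by fun_prop : Continuous fun t => c * (q t * r t ^ 2)).integrableOn_Ioc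
  calc ∫⁻ t in Set.Ioc 0 τ, Phi (q t * (1 + u * r t)) (q t)
      ≤ ∫⁻ t in Set.Ioc 0 τ, ENNReal.ofReal (c * (q t * r t ^ 2)) := lintegral_mono hpoint
    _ = ENNReal.ofReal (∫ t in Set.Ioc 0 τ, c * (q t * r t ^ 2)) :=
      (ofReal_integral_eq_lintegral_ofReal hint (.of_forall fun t => by
        have := hq t; positivity)).symm
    _ = ENNReal.ofReal (c * ∫ t in 0..τ, q t * r t ^ 2) := by
      rw [intervalIntegral.integral_of_le hτ, integral_const_mul]

lemma sum_lintegral_Phi_mul_one_add_le {ι : Type*} {E : Finset ι} {τ : ℝ} (hτ : 0 < τ)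
    {q r : ι → ℝ → ℝ} (hq_cont : ∀ e ∈ E, Continuous (q e)) (hr_cont : ∀ e ∈ E, Continuous (r e))
    (hq : ∀ e ∈ E, ∀ t, 0 < q e t) {M u : ℝ} (hM : 0 ≤ M) (hr : ∀ e ∈ E, ∀ t, |r e t| ≤ M)
    (hu : |u| * M ≤ 1 / 2) :
    ∑ e ∈ E, ENNReal.ofReal (1 / τ) * ∫⁻ t in Set.Ioc 0 τ, Phi (q e t * (1 + u * r e t)) (q e t)
      ≤ ENNReal.ofReal ((1 + 8 * (|u| * M)) * u ^ 2 / 2 *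
          ∑ e ∈ E, (1 / τ) * ∫ t in 0..τ, q e t * r e t ^ 2) := by
  have hnonneg : ∀ e ∈ E, 0 ≤ (1 + 8 * (|u| * M)) * u ^ 2 / 2 *
      ((1 / τ) * ∫ t in 0..τ, q e t * r e t ^ 2) := fun e he => by
    have := intervalIntegral.integral_nonneg (μ := volume) hτ.le fun t _ =>
      (mul_nonneg (hq e he t).le (sq_nonneg (r e t)))
    positivity
  rw [Finset.mul_sum, ENNReal.ofReal_sum_of_nonneg hnonneg]
  refine Finset.sum_le_sum fun e he => ?_
  rw [mul_left_comm, ENNReal.ofReal_mul (by positivity)]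
  gcongr
  exact lintegral_Phi_mul_one_add_le hτ.le (hq_cont e he) (hr_cont e he) (hq e he) hM (hr e he) hu

lemma Finset.sum_eq_half_sum_of_add_swap {V : Type*} {E : Finset (V × V)}
    (hE : ∀ i j, (i, j) ∈ E ↔ (j, i) ∈ E) {f g : V → V → ℝ}
    (hfg : ∀ i j, f i j + f j i = g i j) :
    ∑ e ∈ E, f e.1 e.2 = (1 / 2) * ∑ e ∈ E, g e.1 e.2 := by
  have hswap : ∑ e ∈ E, f e.2 e.1 = ∑ e ∈ E, f e.1 e.2 :=
    Finset.sum_equiv (Equiv.prodComm V V) (fun e => hE e.1 e.2) (fun _ _ => rfl)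
  simp_rw [← hfg, Finset.sum_add_distrib, hswap]
  ring

lemma Fintype.sum_sum_eq_half_sum_sum_of_add_swap {V : Type*} [Fintype V] {f g : V → V → ℝ}
    (hfg : ∀ i j, f i j + f j i = g i j) :
    ∑ i, ∑ j, f i j = (1 / 2) * ∑ i, ∑ j, g i j := by
  simp only [← Fintype.sum_prod_type']
  exact Finset.sum_eq_half_sum_of_add_swap (by simp) hfg

section TiltedRate

variable {V : Type*}

/-- The correction `u * k i j` is shared between `(i, j)` and `(j, i)` in proportion to the rates,
so that the net current `q i j - q j i` moves by exactly `u * k i j`. -/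
noncomputable def tiltedRate (q k : V → V → ℝ) (u : ℝ) (i j : V) : ℝ :=
  q i j * (1 + u * (k i j / (q i j + q j i)))

variable {q k : V → V → ℝ}

lemma mul_div_sub_mul_div_swap (hk : ∀ i j, k i j = -k j i)
    (hk₀ : ∀ i j, q i j + q j i = 0 → k i j = 0) (i j : V) :
    q i j * (k i j / (q i j + q j i)) - q j i * (k j i / (q j i + q i j)) = k i j := by
  rcases eq_or_ne (q i j + q j i) 0 with h | h
  · simp [hk j i, hk₀ i j h]
  · rw [hk j i, add_comm (q j i)]
    field_simp
    ring

lemma tiltedRate_sub_swap (hk : ∀ i j, k i j = -k j i)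
    (hk₀ : ∀ i j, q i j + q j i = 0 → k i j = 0) (u : ℝ) (i j : V) :
    tiltedRate q k u i j - tiltedRate q k u j i = q i j - q j i + u * k i j := by
  unfold tiltedRate
  linear_combination u * mul_div_sub_mul_div_swap hk hk₀ i j

lemma sum_tiltedRate_sub_sum_swap [Fintype V] (hk : ∀ i j, k i j = -k j i)
    (hk₀ : ∀ i j, q i j + q j i = 0 → k i j = 0) (u : ℝ) (i : V) :
    ∑ j, tiltedRate q k u i j - ∑ j, tiltedRate q k u j i
      = ∑ j, q i j - ∑ j, q j i + u * ∑ j, k i j := by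
  simp only [← Finset.sum_sub_distrib, tiltedRate_sub_swap hk hk₀, Finset.mul_sum,
    ← Finset.sum_add_distrib]

lemma sum_sum_mul_tiltedRate [Fintype V] (hk : ∀ i j, k i j = -k j i)
    (hk₀ : ∀ i j, q i j + q j i = 0 → k i j = 0) {a : V → V → ℝ} (ha : ∀ i j, a i j = -a j i)
    (u : ℝ) :
    ∑ i, ∑ j, a i j * tiltedRate q k u i j
      = ∑ i, ∑ j, a i j * q i j + u * ((1 / 2) * ∑ i, ∑ j, a i j * k i j) := by
  have hhalf : ∑ i, ∑ j, a i j * (q i j * (k i j / (q i j + q j i)))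
      = (1 / 2) * ∑ i, ∑ j, a i j * k i j :=
    Fintype.sum_sum_eq_half_sum_sum_of_add_swap
      (f := fun i j => a i j * (q i j * (k i j / (q i j + q j i))))
      (g := fun i j => a i j * k i j) fun i j => by
        rw [ha j i]
        linear_combination a i j * mul_div_sub_mul_div_swap hk hk₀ i j
  rw [← hhalf, Finset.mul_sum]
  simp only [Finset.mul_sum, ← Finset.sum_add_distrib, tiltedRate]
  congr! 2; ring

lemma sum_mul_div_add_swap_sq {E : Finset (V × V)} (hE : ∀ i j, (i, j) ∈ E ↔ (j, i) ∈ E)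
    (hk : ∀ i j, k i j = -k j i) :
    ∑ e ∈ E, q e.1 e.2 * (k e.1 e.2 / (q e.1 e.2 + q e.2 e.1)) ^ 2
      = (1 / 2) * ∑ e ∈ E, k e.1 e.2 ^ 2 / (q e.1 e.2 + q e.2 e.1) :=
  Finset.sum_eq_half_sum_of_add_swap (f := fun i j => q i j * (k i j / (q i j + q j i)) ^ 2)
    (g := fun i j => k i j ^ 2 / (q i j + q j i)) hE fun i j => by
    rw [hk j i, neg_div, neg_sq, add_comm (q j i), ← add_mul, div_pow]
    rcases eq_or_ne (q i j + q j i) 0 with h | h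
    · simp [h]
    · field_simp

lemma continuous_div_add_swap {E : Finset (V × V)} {q k : V → V → ℝ → ℝ}
    (hq : ∀ i j, Continuous (q i j)) (hk : ∀ i j, Continuous (k i j))
    (hS : ∀ i j, (i, j) ∈ E → ∀ t, 0 < q i j t + q j i t)
    (hk_zero : ∀ i j, (i, j) ∉ E → ∀ t, k i j t = 0) (i j : V) :
    Continuous fun t => k i j t / (q i j t + q j i t) := by
  by_cases hij : (i, j) ∈ E
  · exact (hk i j).div ((hq i j).add (hq j i)) fun t => (hS i j hij t).ne'
  · simpa [hk_zero i j hij] using continuous_const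

lemma sum_integral_mul_div_add_swap_sq {E : Finset (V × V)} (hE : ∀ i j, (i, j) ∈ E ↔ (j, i) ∈ E)
    {q k : V → V → ℝ → ℝ} (hq : ∀ i j, Continuous (q i j)) (hk : ∀ i j, Continuous (k i j))
    (hS : ∀ i j, (i, j) ∈ E → ∀ t, 0 < q i j t + q j i t) (hk_anti : ∀ i j t, k i j t = -k j i t)
    (τ : ℝ) :
    ∑ e ∈ E, (1 / τ) * ∫ t in 0..τ, q e.1 e.2 t * (k e.1 e.2 t / (q e.1 e.2 t + q e.2 e.1 t)) ^ 2
      = (1 / 2) * ∑ e ∈ E, (1 / τ) * ∫ t in 0..τ,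
          k e.1 e.2 t ^ 2 / (q e.1 e.2 t + q e.2 e.1 t) := by
  have hS' : ∀ e ∈ E, ∀ t, q e.1 e.2 t + q e.2 e.1 t ≠ 0 := fun e he t => (hS e.1 e.2 he t).ne'
  have hr : ∀ e ∈ E, Continuous fun t => k e.1 e.2 t / (q e.1 e.2 t + q e.2 e.1 t) :=
    fun e he => (hk _ _).div ((hq _ _).add (hq _ _)) (hS' e he)
  rw [← Finset.mul_sum, ← Finset.mul_sum, ← intervalIntegral.integral_finsetSum,
    ← intervalIntegral.integral_finsetSum, mul_left_comm]
  · congr 1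
    rw [← intervalIntegral.integral_const_mul]
    congr 1
    funext t
    exact sum_mul_div_add_swap_sq (q := fun i j => q i j t) hE fun i j => hk_anti i j t
  · exact fun e he =>
      (((hk _ _).pow 2).div ((hq _ _).add (hq _ _)) (hS' e he)).intervalIntegrable _ _
  · exact fun e he => ((hq _ _).mul ((hr e he).pow 2)).intervalIntegrable _ _

lemma integral_sum_sum_mul_tiltedRate [Fintype V] {q k a : V → V → ℝ → ℝ} {b : ℝ → ℝ}
    (hq : ∀ i j, Continuous (q i j)) (hk : ∀ i j, Continuous (k i j))
    (ha : ∀ i j, Continuous (a i j)) (hb : Continuous b) (hk_anti : ∀ i j t, k i j t = -k j i t)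
    (hk₀ : ∀ i j t, q i j t + q j i t = 0 → k i j t = 0) (ha_anti : ∀ i j t, a i j t = -a j i t)
    (u τ : ℝ) :
    (1 / τ) * ∫ t in 0..τ,
        (∑ i, ∑ j, a i j t * tiltedRate (fun i j => q i j t) (fun i j => k i j t) u i j + b t)
      = (1 / τ) * (∫ t in 0..τ, (∑ i, ∑ j, a i j t * q i j t + b t))
        + u * ((1 / τ) * ∫ t in 0..τ, (1 / 2) * ∑ i, ∑ j, a i j t * k i j t) := by
  simp_rw [sum_sum_mul_tiltedRate (fun i j => hk_anti i j _) (fun i j => hk₀ i j _)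
    (fun i j => ha_anti i j _), add_right_comm _ (u * _)]
  have h₁ : Continuous fun t => ∑ i, ∑ j, a i j t * q i j t + b t := by fun_prop
  have h₂ : Continuous fun t => (1 / 2) * ∑ i, ∑ j, a i j t * k i j t := by fun_prop
  rw [intervalIntegral.integral_add (h₁.intervalIntegrable _ _)
    ((h₂.intervalIntegrable _ _).const_mul u), intervalIntegral.integral_const_mul]
  ring

lemma sum_lintegral_Phi_tiltedRate_le {E : Finset (V × V)}
    (hE : ∀ i j, (i, j) ∈ E ↔ (j, i) ∈ E) {τ : ℝ} (hτ : 0 < τ) {q k : V → V → ℝ → ℝ}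
    (hq_cont : ∀ i j, Continuous (q i j)) (hk_cont : ∀ i j, Continuous (k i j))
    (hq : ∀ i j, (i, j) ∈ E → ∀ t, 0 < q i j t) (hk_anti : ∀ i j t, k i j t = -k j i t)
    {M u : ℝ} (hM : 0 ≤ M) (hkM : ∀ i j, (i, j) ∈ E → ∀ t, |k i j t / (q i j t + q j i t)| ≤ M)
    (hu : |u| * M ≤ 1 / 2) :
    ∑ e ∈ E, ENNReal.ofReal (1 / τ) * ∫⁻ t in Set.Ioc 0 τ,
        Phi (tiltedRate (fun i j => q i j t) (fun i j => k i j t) u e.1 e.2) (q e.1 e.2 t)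
      ≤ ENNReal.ofReal ((1 + 8 * M * |u|) * u ^ 2 * ((1 / 4) *
          ∑ e ∈ E, (1 / τ) * ∫ t in 0..τ, k e.1 e.2 t ^ 2 / (q e.1 e.2 t + q e.2 e.1 t))) := by
  have hS : ∀ i j, (i, j) ∈ E → ∀ t, 0 < q i j t + q j i t := fun i j h t =>
    add_pos (hq i j h t) (hq j i ((hE i j).1 h) t)
  calc _ ≤ ENNReal.ofReal ((1 + 8 * (|u| * M)) * u ^ 2 / 2 * ∑ e ∈ E, (1 / τ) * ∫ t in 0..τ,
          q e.1 e.2 t * (k e.1 e.2 t / (q e.1 e.2 t + q e.2 e.1 t)) ^ 2) :=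
        sum_lintegral_Phi_mul_one_add_le (E := E) (q := fun e t => q e.1 e.2 t)
          (r := fun e t => k e.1 e.2 t / (q e.1 e.2 t + q e.2 e.1 t)) hτ
          (fun _ _ => hq_cont _ _)
          (fun e he => (hk_cont _ _).div ((hq_cont _ _).add (hq_cont _ _)) fun t =>
            (hS e.1 e.2 he t).ne')
          (fun e he => hq e.1 e.2 he) hM (fun e he => hkM e.1 e.2 he) hu
    _ = _ := by
      rw [sum_integral_mul_div_add_swap_sq hE hq_cont hk_cont hS hk_anti τ]
      ring_nf

end TiltedRate

lemma exists_forall_abs_le_of_periodic {ι : Type*} [Fintype ι] {f : ι → ℝ → ℝ} {τ : ℝ}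
    (hτ : τ ≠ 0) (hf : ∀ i, Continuous (f i)) (hp : ∀ i, Function.Periodic (f i) τ) :
    ∃ M, 0 ≤ M ∧ ∀ i t, |f i t| ≤ M := by
  have hF : Function.Periodic (fun t i => f i t) τ := fun t => funext fun i => hp i t
  obtain ⟨C, hC⟩ := isBounded_iff_forall_norm_le.1
    (hF.isBounded_of_continuous hτ (continuous_pi hf))
  refine ⟨max C 0, le_max_right _ _, fun i t => le_max_of_le_left ?_⟩
  exact (norm_le_pi_norm (fun i => f i t) i).trans (hC _ ⟨t, rfl⟩)

lemma limsup_div_sub_sq_le {f : ℝ → ℝ≥0∞} {y₀ a c L : ℝ} (ha : a ≠ 0)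
    (hf : ∀ᶠ u in 𝓝 0, f (y₀ + u * a) ≤ ENNReal.ofReal ((1 + c * |u|) * u ^ 2 * L)) :
    limsup (fun y => f y / ENNReal.ofReal ((y - y₀) ^ 2)) (𝓝[≠] y₀)
      ≤ ENNReal.ofReal (L / a ^ 2) := by
  set g : ℝ → ℝ≥0∞ := fun y => ENNReal.ofReal ((1 + c * |(y - y₀) / a|) * (L / a ^ 2))
  have hg : Tendsto g (𝓝[≠] y₀) (𝓝 (ENNReal.ofReal (L / a ^ 2))) := by
    have : Continuous g := ENNReal.continuous_ofReal.comp (by fun_prop)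
    simpa [g] using (this.tendsto y₀).mono_left nhdsWithin_le_nhds
  have hu : Tendsto (fun y => (y - y₀) / a) (𝓝[≠] y₀) (𝓝 0) := by
    have : Continuous fun y => (y - y₀) / a := by fun_prop
    simpa using (this.tendsto y₀).mono_left nhdsWithin_le_nhds
  have hle : ∀ᶠ y in 𝓝[≠] y₀, f y / ENNReal.ofReal ((y - y₀) ^ 2) ≤ g y := by
    filter_upwards [hu.eventually hf, self_mem_nhdsWithin] with y hy hne
    have hy₀ : y - y₀ ≠ 0 := sub_ne_zero.2 hne
    rw [show y₀ + (y - y₀) / a * a = y by field_simp; ring] at hy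
    calc f y / ENNReal.ofReal ((y - y₀) ^ 2)
        ≤ ENNReal.ofReal ((1 + c * |(y - y₀) / a|) * ((y - y₀) / a) ^ 2 * L)
            / ENNReal.ofReal ((y - y₀) ^ 2) := by gcongr
      _ = g y := by
        rw [← ENNReal.ofReal_div_of_pos (by positivity)]
        congr 1
        field_simp
  calc limsup (fun y => f y / ENNReal.ofReal ((y - y₀) ^ 2)) (𝓝[≠] y₀)
      ≤ limsup g (𝓝[≠] y₀) := limsup_le_limsup hle
    _ = ENNReal.ofReal (L / a ^ 2) := hg.limsup_eq

theorem stmt4_general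
    {V : Type} [Fintype V]
    (E : Finset (V × V))
    (hE_symm : ∀ i j : V, (i, j) ∈ E ↔ (j, i) ∈ E)
    (τ : ℝ) (hτ : 0 < τ)
    (w : V → V → ℝ → ℝ)
    (hw_cont : ∀ i j, Continuous (w i j))
    (hw_per : ∀ i j, Function.Periodic (w i j) τ)
    (hw_pos : ∀ i j, (i, j) ∈ E → ∀ t, 0 < w i j t)
    (hw_zero : ∀ i j, (i, j) ∉ E → ∀ t, w i j t = 0)
    (pi : V → ℝ → ℝ)
    (hpi_diff : ∀ i, ContDiff ℝ 1 (pi i))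
    (hpi_per : ∀ i, Function.Periodic (pi i) τ)
    (hpi_pos : ∀ i t, 0 < pi i t)
    (hpi_sum : ∀ t : ℝ, ∑ i, pi i t = 1)
    (hpi_cont_eq : ∀ i t, deriv (pi i) t
      + (∑ j, pi i t * w i j t) - (∑ j, pi j t * w j i t) = 0)
    (α : V → V → ℝ → ℝ)
    (hα_cont : ∀ i j, Continuous (α i j))
    (hα_anti : ∀ i j (t : ℝ), α i j t = - α j i t)
    (γ : V → ℝ → ℝ)
    (hγ_cont : ∀ i, Continuous (γ i))
    (y0 : ℝ)
    (hy0 : y0 = (1 / τ) * (∫ t in (0:ℝ)..τ,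
      ((∑ i, ∑ j, α i j t * (pi i t * w i j t)) + ∑ i, γ i t * pi i t)))
    (Iag : ℝ → ℝ≥0∞)
    (hI : ∀ y : ℝ, Iag y = sInf { c : ℝ≥0∞ |
      ∃ (Q : V → V → ℝ → ℝ) (ρ : V → ℝ → ℝ),
        (∀ i j, Continuous (Q i j)) ∧
        (∀ i j, Function.Periodic (Q i j) τ) ∧
        (∀ i j t, 0 ≤ Q i j t) ∧
        (∀ i j, (i, j) ∉ E → ∀ t, Q i j t = 0) ∧
        (∀ i, ContDiff ℝ 1 (ρ i)) ∧
        (∀ i, Function.Periodic (ρ i) τ) ∧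
        (∀ i t, 0 ≤ ρ i t) ∧
        (∀ t : ℝ, ∑ i, ρ i t = 1) ∧
        (∀ i t, deriv (ρ i) t + (∑ j, Q i j t) - (∑ j, Q j i t) = 0) ∧
        ((1 / τ) * (∫ t in (0:ℝ)..τ,
          ((∑ i, ∑ j, α i j t * Q i j t) + ∑ i, γ i t * ρ i t)) = y) ∧
        c = ∑ e ∈ E, ENNReal.ofReal (1 / τ) *
          (∫⁻ t in Set.Ioc (0:ℝ) τ, Phi (Q e.1 e.2 t) (ρ e.1 t * w e.1 e.2 t)) })
    -- the divergence-free current 𝒦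
    (K : V → V → ℝ → ℝ)
    (hK_cont : ∀ i j, Continuous (K i j))
    (hK_per : ∀ i j, Function.Periodic (K i j) τ)
    (hK_anti : ∀ i j (t : ℝ), K i j t = - K j i t)
    (hK_zero : ∀ i j, (i, j) ∉ E → ∀ t, K i j t = 0)
    (hK_div : ∀ i (t : ℝ), (∑ j, K i j t) = 0)
    (Kav : ℝ)
    (hKav : Kav = (1 / τ) * (∫ t in (0:ℝ)..τ, (1 / 2) * ∑ i, ∑ j, α i j t * K i j t))
    (hKav_ne : Kav ≠ 0)
    (σtilde : ℝ)
    (hσtilde : σtilde = ∑ e ∈ E, (1 / τ) * (∫ t in (0:ℝ)..τ,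
      (K e.1 e.2 t) ^ 2 / (pi e.1 t * w e.1 e.2 t + pi e.2 t * w e.2 e.1 t))) :
    Filter.limsup (fun y : ℝ => Iag y / ENNReal.ofReal ((y - y0) ^ 2)) (𝓝[≠] y0)
      ≤ ENNReal.ofReal (σtilde / (4 * Kav ^ 2)) := by
  classical
  set q : V → V → ℝ → ℝ := fun i j t => pi i t * w i j t
  have hq_cont : ∀ i j, Continuous (q i j) := fun i j =>
    (hpi_diff i).continuous.mul (hw_cont i j)
  have hq_pos : ∀ i j, (i, j) ∈ E → ∀ t, 0 < q i j t := fun i j h t =>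
    mul_pos (hpi_pos i t) (hw_pos i j h t)
  have hq_zero : ∀ i j, (i, j) ∉ E → ∀ t, q i j t = 0 := fun i j h t => by
    simp only [q, hw_zero i j h t, mul_zero]
  have hq_nonneg : ∀ i j t, 0 ≤ q i j t := fun i j t =>
    if h : (i, j) ∈ E then (hq_pos i j h t).le else (hq_zero i j h t).ge
  have hS_pos : ∀ i j, (i, j) ∈ E → ∀ t, 0 < q i j t + q j i t := fun i j h t =>
    add_pos (hq_pos i j h t) (hq_pos j i ((hE_symm i j).1 h) t)
  have hK₀ : ∀ i j t, q i j t + q j i t = 0 → K i j t = 0 := fun i j t h =>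
    if hij : (i, j) ∈ E then absurd h (hS_pos i j hij t).ne' else hK_zero i j hij t
  set r : V → V → ℝ → ℝ := fun i j t => K i j t / (q i j t + q j i t)
  have hr_cont : ∀ i j, Continuous (r i j) := continuous_div_add_swap hq_cont hK_cont hS_pos hK_zero
  obtain ⟨M, hM0, hM⟩ := exists_forall_abs_le_of_periodic (f := fun p : V × V => r p.1 p.2)
    hτ.ne' (fun p => hr_cont p.1 p.2)
    (fun p t => by simp only [r, q, hK_per _ _ t, hpi_per _ t, hw_per _ _ t])
  have hupper : ∀ u, |u| * M ≤ 1 / 2 →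
      Iag (y0 + u * Kav) ≤ ENNReal.ofReal ((1 + 8 * M * |u|) * u ^ 2 * ((1 / 4) * σtilde)) := by
    intro u hu
    have hr_small : ∀ i j t, 0 ≤ 1 + u * r i j t := fun i j t => by
      have : |u * r i j t| ≤ 1 / 2 := by
        rw [abs_mul]
        exact (mul_le_mul_of_nonneg_left (hM (i, j) t) (abs_nonneg u)).trans hu
      linarith [neg_abs_le (u * r i j t)]
    rw [hI, hσtilde]
    refine sInf_le_of_le ⟨fun i j t => tiltedRate (fun i j => q i j t) (fun i j => K i j t) u i j,
      pi, fun i j => (hq_cont i j).mul (continuous_const.add (continuous_const.mul (hr_cont i j))),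
      fun i j t => by simp only [tiltedRate, q, hK_per _ _ t, hpi_per _ t, hw_per _ _ t],
      fun i j t => mul_nonneg (hq_nonneg i j t) (hr_small i j t),
      fun i j h t => by simp only [tiltedRate, hq_zero i j h t, zero_mul],
      hpi_diff, hpi_per, fun i t => (hpi_pos i t).le, hpi_sum,
      fun i t => by
        rw [add_sub_assoc, sum_tiltedRate_sub_sum_swap (fun i j => hK_anti i j t)
          (fun i j => hK₀ i j t), hK_div, mul_zero, add_zero, ← add_sub_assoc]
        exact hpi_cont_eq i t,
      by
        rw [hy0, hKav]
        exact integral_sum_sum_mul_tiltedRate hq_cont hK_cont hα_cont (by fun_prop) hK_anti hK₀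
          hα_anti u τ,
      rfl⟩ ?_
    exact sum_lintegral_Phi_tiltedRate_le hE_symm hτ hq_cont hK_cont hq_pos hK_anti hM0
      (fun i j _ t => hM (i, j) t) hu
  have hsmall : ∀ᶠ u in 𝓝 (0 : ℝ), |u| * M ≤ 1 / 2 :=
    ((by fun_prop : Continuous fun u : ℝ => |u| * M).tendsto' 0 0 (by simp)).eventually
      (eventually_le_nhds (by norm_num))
  rw [show σtilde / (4 * Kav ^ 2) = (1 / 4) * σtilde / Kav ^ 2 by ring]
  exact limsup_div_sub_sq_le hKav_ne (hsmall.mono hupper)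

theorem stmt4
    {V : Type} [Fintype V] [Nonempty V]
    (E : Finset (V × V)) (hE : ∀ i : V, (i, i) ∉ E)
    (hE_symm : ∀ i j : V, (i, j) ∈ E ↔ (j, i) ∈ E)
    (τ : ℝ) (hτ : 0 < τ)
    (w : V → V → ℝ → ℝ)
    (hw_cont : ∀ i j, Continuous (w i j))
    (hw_per : ∀ i j, Function.Periodic (w i j) τ)
    (hw_pos : ∀ i j, (i, j) ∈ E → ∀ t, 0 < w i j t)
    (hw_zero : ∀ i j, (i, j) ∉ E → ∀ t, w i j t = 0)
    (pi : V → ℝ → ℝ)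
    (hpi_diff : ∀ i, ContDiff ℝ 1 (pi i))
    (hpi_per : ∀ i, Function.Periodic (pi i) τ)
    (hpi_pos : ∀ i t, 0 < pi i t)
    (hpi_sum : ∀ t : ℝ, ∑ i, pi i t = 1)
    (hpi_cont_eq : ∀ i t, deriv (pi i) t
      + (∑ j, pi i t * w i j t) - (∑ j, pi j t * w j i t) = 0)
    (α : V → V → ℝ → ℝ)
    (hα_cont : ∀ i j, Continuous (α i j))
    (hα_per : ∀ i j, Function.Periodic (α i j) τ)
    (hα_anti : ∀ i j (t : ℝ), α i j t = - α j i t)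
    (γ : V → ℝ → ℝ)
    (hγ_cont : ∀ i, Continuous (γ i))
    (hγ_per : ∀ i, Function.Periodic (γ i) τ)
    (y0 : ℝ)
    (hy0 : y0 = (1 / τ) * (∫ t in (0:ℝ)..τ,
      ((∑ i, ∑ j, α i j t * (pi i t * w i j t)) + ∑ i, γ i t * pi i t)))
    (hy0_ne : y0 ≠ 0)
    (Iag : ℝ → ℝ≥0∞)
    (hI : ∀ y : ℝ, Iag y = sInf { c : ℝ≥0∞ |
      ∃ (Q : V → V → ℝ → ℝ) (ρ : V → ℝ → ℝ),
        (∀ i j, Continuous (Q i j)) ∧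
        (∀ i j, Function.Periodic (Q i j) τ) ∧
        (∀ i j t, 0 ≤ Q i j t) ∧
        (∀ i j, (i, j) ∉ E → ∀ t, Q i j t = 0) ∧
        (∀ i, ContDiff ℝ 1 (ρ i)) ∧
        (∀ i, Function.Periodic (ρ i) τ) ∧
        (∀ i t, 0 ≤ ρ i t) ∧
        (∀ t : ℝ, ∑ i, ρ i t = 1) ∧
        (∀ i t, deriv (ρ i) t + (∑ j, Q i j t) - (∑ j, Q j i t) = 0) ∧
        ((1 / τ) * (∫ t in (0:ℝ)..τ,
          ((∑ i, ∑ j, α i j t * Q i j t) + ∑ i, γ i t * ρ i t)) = y) ∧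
        c = ∑ e ∈ E, ENNReal.ofReal (1 / τ) *
          (∫⁻ t in Set.Ioc (0:ℝ) τ, Phi (Q e.1 e.2 t) (ρ e.1 t * w e.1 e.2 t)) })
    -- the divergence-free current 𝒦
    (K : V → V → ℝ → ℝ)
    (hK_cont : ∀ i j, Continuous (K i j))
    (hK_per : ∀ i j, Function.Periodic (K i j) τ)
    (hK_anti : ∀ i j (t : ℝ), K i j t = - K j i t)
    (hK_zero : ∀ i j, (i, j) ∉ E → ∀ t, K i j t = 0)
    (hK_div : ∀ i (t : ℝ), (∑ j, K i j t) = 0)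
    (Kav : ℝ)
    (hKav : Kav = (1 / τ) * (∫ t in (0:ℝ)..τ, (1 / 2) * ∑ i, ∑ j, α i j t * K i j t))
    (hKav_ne : Kav ≠ 0)
    (σtilde : ℝ)
    (hσtilde : σtilde = ∑ e ∈ E, (1 / τ) * (∫ t in (0:ℝ)..τ,
      (K e.1 e.2 t) ^ 2 / (pi e.1 t * w e.1 e.2 t + pi e.2 t * w e.2 e.1 t))) :
    Filter.limsup (fun y : ℝ => Iag y / ENNReal.ofReal ((y - y0) ^ 2)) (𝓝[≠] y0)
      ≤ ENNReal.ofReal (σtilde / (4 * Kav ^ 2)) :=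
  stmt4_general E hE_symm τ hτ w hw_cont hw_per hw_pos hw_zero pi hpi_diff hpi_per hpi_pos hpi_sum
    hpi_cont_eq α hα_cont hα_anti γ hγ_cont y0 hy0 Iag hI K hK_cont hK_per hK_anti hK_zero hK_div
    Kav hKav hKav_ne σtilde hσtilde
end
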